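/- arXiv:1206.0418 — 2 statements merged into one kernel-verified Lean document; each statement's English description precedes it below -/
import Mathlib

section
/- Let C > 0 and k > 0 be reals with k ≥ 2C. Then there exists a positive integer L such that k/(L−2) ≥ C > k/(L−1), and for any such L one has C/L < C − k/L ≤ 2C/L; consequently C − k/L ≤ 2C²/(k + C) ≤ 2C²/k. -/
theorem stmt3 (C k : ℝ) (hC : 0 < C) (hk : 0 < k) (hkC : k ≥ 2 * C) :
    (∃ L : ℕ, 0 < L ∧ k / ((L : ℝ) - 2) ≥ C ∧ C > k / ((L : ℝ) - 1)) ∧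
    (∀ L : ℕ, 0 < L → k / ((L : ℝ) - 2) ≥ C → C > k / ((L : ℝ) - 1) →
      (C / (L : ℝ) < C - k / (L : ℝ) ∧ C - k / (L : ℝ) ≤ 2 * C / (L : ℝ) ∧
        C - k / (L : ℝ) ≤ 2 * C ^ 2 / (k + C) ∧ 2 * C ^ 2 / (k + C) ≤ 2 * C ^ 2 / k)) := by
  constructor
  · set n := ⌊k / C⌋₊ with hn
    have h2 : (2:ℝ) ≤ k / C := by rw [le_div_iff₀ hC]; linarith
    have hn2 : 2 ≤ n := Nat.le_floor (by exact_mod_cast h2)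
    have hfl : (n : ℝ) ≤ k / C := Nat.floor_le (by positivity)
    have hfu : k / C < (n : ℝ) + 1 := Nat.lt_floor_add_one _
    have hnpos : (0:ℝ) < n := by exact_mod_cast Nat.lt_of_lt_of_le Nat.zero_lt_two hn2
    refine ⟨n + 2, by omega, ?_, ?_⟩
    · push_cast
      rw [ge_iff_le, le_div_iff₀ (by linarith)]
      have := (le_div_iff₀ hC).mp hfl
      nlinarith
    · push_cast
      rw [gt_iff_lt, div_lt_iff₀ (by linarith)]
      have := (div_lt_iff₀ hC).mp hfu
      nlinarith
  · intro L hL h1 h2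
    have hL4 : 4 ≤ L := by
      by_contra h
      interval_cases L
      · simp at h1 h2
        rw [le_div_iff_of_neg (by norm_num : (1:ℝ) - 2 < 0)] at h1
        nlinarith
      · norm_num at h1
        linarith
      · norm_num at h2
        rw [div_lt_iff₀ (by norm_num : (0:ℝ) < 2)] at h2
        linarith
    have hLr : (4:ℝ) ≤ L := by exact_mod_cast hL4
    have hLpos : (0:ℝ) < L := by linarith
    have hkl : k < C * ((L:ℝ) - 1) := by
      rw [gt_iff_lt, div_lt_iff₀ (by linarith)] at h2
      linarith
    have hku : C * ((L:ℝ) - 2) ≤ k := by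
      rw [ge_iff_le, le_div_iff₀ (by linarith)] at h1
      linarith
    refine ⟨?_, ?_, ?_, ?_⟩
    · rw [div_lt_iff₀ hLpos, sub_mul, div_mul_cancel₀ _ (ne_of_gt hLpos)]
      linarith
    · rw [sub_le_iff_le_add, ← add_div, le_div_iff₀ hLpos]
      nlinarith
    · have hkC0 : (0:ℝ) < k + C := by linarith
      rw [sub_le_iff_le_add, div_add_div _ _ (ne_of_gt hkC0) (ne_of_gt hLpos),
        le_div_iff₀ (by positivity)]
      nlinarith
    · apply div_le_div_of_nonneg_left (by positivity) hk
      linarith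
end

section
/- Consider a memoryless channel with finite input alphabet I, finite output alphabet O, and transition probabilities P_{ij}, together with a pairwise independent random code of 2^n codewords of length T (each codeword's symbols i.i.d. with distribution Q on I, distinct codewords pairwise independent, joint distribution symmetric). Under maximum-likelihood decoding, for any message m and any 0 < ρ ≤ 1, the average probability of error satisfies P_{e,m} ≤ 2^{−T(−ρR + E₀(ρ,Q))}, where R = n/T and E₀(ρ,Q) = −log₂ [ Σ_{j∈O} ( Σ_{i∈I} Q(i) P_{ij}^{1/(1+ρ)} )^{1+ρ} ]. -/
/-!
Gallager's random-coding argument. For a fixed codebook, an ML error at the output `y` means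
that some rival `m'` is at least as likely as `m`; with `σ = 1 / (1 + ρ)` this gives
`1[error] ≤ (∑_{m' ≠ m} (ℓ(m') / ℓ(m)) ^ σ) ^ ρ`, so the error probability is at most
`∑_y ℓ(m) ^ σ (∑_{m' ≠ m} ℓ(m') ^ σ) ^ ρ`. Averaging over the code on the event `x(m) = v`,
Jensen's inequality for the concave map `t ↦ t ^ ρ` moves the expectation inside the power,
and pairwise independence makes the mean of each `ℓ(m') ^ σ` equal to `∑_v' q(v') ℓ(v') ^ σ`.
Finally the sum over `y` factorizes over the `T` coordinates into `2 ^ (-T E₀(ρ, Q))`.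
-/

open MeasureTheory
open scoped Classical ENNReal

/-- Likelihood of output `y` given codeword `x` over a memoryless channel with
transition probabilities `P`. -/
noncomputable def likelihood {I O : Type*} [Fintype O] (P : I → O → ℝ) {T : ℕ}
    (x : Fin T → I) (y : Fin T → O) : ℝ := ∏ t, P (x t) (y t)

/-- Channel-averaged probability of ML-decoding error for codebook `c` and message `m`:
an error is counted when some other message is at least as likely as `m`. -/
noncomputable def mlErr {I O : Type*} [Fintype I] [Fintype O] (P : I → O → ℝ) {n T : ℕ}
    (c : (Fin n → Bool) → (Fin T → I)) (m : Fin n → Bool) : ℝ :=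
  ∑ y : Fin T → O, likelihood P (c m) y *
    (if ∃ m', m' ≠ m ∧ likelihood P (c m) y ≤ likelihood P (c m') y then 1 else 0)

/-- Gallager's function `E₀(ρ, Q)` with base-2 logarithm. -/
noncomputable def gallagerE0 {I O : Type*} [Fintype I] [Fintype O]
    (Q : I → ℝ) (P : I → O → ℝ) (ρ : ℝ) : ℝ :=
  -Real.logb 2 (∑ j : O, (∑ i : I, Q i * (P i j) ^ (1 / (1 + ρ))) ^ (1 + ρ))

open Finset

theorem likelihood_nonneg {I O : Type*} [Fintype O] {P : I → O → ℝ} (hP0 : ∀ i j, 0 ≤ P i j)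
    {T : ℕ} (x : Fin T → I) (y : Fin T → O) : 0 ≤ likelihood P x y :=
  prod_nonneg fun _ _ ↦ hP0 _ _

theorem mlErr_nonneg {I O : Type*} [Fintype I] [Fintype O] {P : I → O → ℝ}
    (hP0 : ∀ i j, 0 ≤ P i j) {n T : ℕ} (c : (Fin n → Bool) → Fin T → I) (m : Fin n → Bool) :
    0 ≤ mlErr P c m :=
  sum_nonneg fun _ _ ↦ mul_nonneg (likelihood_nonneg hP0 _ _) (by split_ifs <;> norm_num)

theorem le_rpow_mul_sum_rpow {ι : Type*} {s : Finset ι} {b : ι → ℝ} {x ρ : ℝ} (hρ : 0 ≤ ρ)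
    (hx : 0 ≤ x) (hb : ∀ k ∈ s, 0 ≤ b k) (h : ∃ k ∈ s, x ≤ b k) :
    x ≤ x ^ (1 / (1 + ρ)) * (∑ k ∈ s, b k ^ (1 / (1 + ρ))) ^ ρ := by
  obtain ⟨k, hk, hxk⟩ := h
  calc x = x ^ (1 / (1 + ρ)) * (x ^ (1 / (1 + ρ))) ^ ρ := by
        rw [← Real.rpow_mul hx, ← Real.rpow_add' hx (by field_simp; positivity)]
        field_simp
        simp
    _ ≤ x ^ (1 / (1 + ρ)) * (b k ^ (1 / (1 + ρ))) ^ ρ := by gcongr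
    _ ≤ x ^ (1 / (1 + ρ)) * (∑ k ∈ s, b k ^ (1 / (1 + ρ))) ^ ρ := by
        gcongr
        · exact Real.rpow_nonneg (hb k hk) _
        · exact single_le_sum (f := fun k ↦ b k ^ (1 / (1 + ρ)))
            (fun k hk ↦ Real.rpow_nonneg (hb k hk) _) hk

theorem mlErr_le_sum_rpow {I O : Type*} [Fintype I] [Fintype O] {P : I → O → ℝ}
    (hP0 : ∀ i j, 0 ≤ P i j) {n T : ℕ} (c : (Fin n → Bool) → Fin T → I) (m : Fin n → Bool)
    {ρ : ℝ} (hρ : 0 ≤ ρ) :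
    mlErr P c m ≤ ∑ y, likelihood P (c m) y ^ (1 / (1 + ρ)) *
      (∑ m' ∈ univ.erase m, likelihood P (c m') y ^ (1 / (1 + ρ))) ^ ρ := by
  refine sum_le_sum fun y _ ↦ ?_
  split_ifs with h
  · rw [mul_one]
    refine le_rpow_mul_sum_rpow hρ (likelihood_nonneg hP0 _ _)
      (fun _ _ ↦ likelihood_nonneg hP0 _ _) ?_
    obtain ⟨m', hm', hle⟩ := h
    exact ⟨m', mem_erase.mpr ⟨hm', mem_univ _⟩, hle⟩
  · rw [mul_zero]
    exact mul_nonneg (Real.rpow_nonneg (likelihood_nonneg hP0 _ _) _)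
      (Real.rpow_nonneg (sum_nonneg fun _ _ ↦ Real.rpow_nonneg (likelihood_nonneg hP0 _ _) _) _)

theorem setIntegral_rpow_le_of_setIntegral_le {Ω : Type*} [MeasurableSpace Ω] {μ : Measure Ω}
    {s : Set Ω} {f : Ω → ℝ} {ρ c : ℝ} (hρ0 : 0 ≤ ρ) (hρ1 : ρ ≤ 1) (hs : μ s ≠ ∞)
    (hf0 : ∀ ω, 0 ≤ f ω) (hfi : IntegrableOn f s μ) (hfρ : IntegrableOn (fun ω ↦ f ω ^ ρ) s μ)
    (h : ∫ ω in s, f ω ∂μ ≤ μ.real s * c) :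
    ∫ ω in s, f ω ^ ρ ∂μ ≤ μ.real s * c ^ ρ := by
  rcases eq_or_ne (μ s) 0 with hs0 | hs0
  · simp [Measure.restrict_eq_zero.mpr hs0, measureReal_def, hs0]
  have hpos : 0 < μ.real s := ENNReal.toReal_pos hs0 hs
  have hint_eq (g : Ω → ℝ) : ∫ ω in s, g ω ∂μ = μ.real s * ⨍ ω in s, g ω ∂μ := by
    rw [setAverage_eq, smul_eq_mul, mul_inv_cancel_left₀ hpos.ne']
  have havg_nonneg : 0 ≤ ⨍ ω in s, f ω ∂μ := by
    rw [setAverage_eq, smul_eq_mul]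
    exact mul_nonneg (inv_nonneg.mpr hpos.le) (integral_nonneg hf0)
  have havg_le : ⨍ ω in s, f ω ∂μ ≤ c := by
    rwa [hint_eq, mul_le_mul_iff_right₀ hpos] at h
  calc ∫ ω in s, f ω ^ ρ ∂μ = μ.real s * ⨍ ω in s, f ω ^ ρ ∂μ := hint_eq _
    _ ≤ μ.real s * (⨍ ω in s, f ω ∂μ) ^ ρ := by
      gcongr
      exact (Real.concaveOn_rpow hρ0 hρ1).le_map_set_average
        (Real.continuous_rpow_const hρ0).continuousOn isClosed_Ici hs0 hs
        (ae_of_all _ hf0) hfi hfρ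
    _ ≤ μ.real s * c ^ ρ := by gcongr

section RivalSum

variable {Ω M X : Type*} [MeasurableSpace Ω] [Fintype X]
  (μ : Measure Ω) (C : Ω → M → X) (m : M) (s : Finset M) (f : X → ℝ)

/-- The code `C` need not be measurable, so the events `{C m = v ∧ C m' = v'}` are replaced by
measurable hulls of the same measure; on `{C m = v}` this dominates `∑ m' ∈ s, f (C m')`. -/
noncomputable def rivalSum (v : X) (ω : Ω) : ℝ :=
  ∑ m' ∈ s, ∑ v', f v' * (toMeasurable μ {ω | C ω m = v ∧ C ω m' = v'}).indicator 1 ω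

variable {μ C m s f}

theorem rivalSum_nonneg (hf : ∀ v, 0 ≤ f v) (v : X) (ω : Ω) : 0 ≤ rivalSum μ C m s f v ω :=
  sum_nonneg fun _ _ ↦ sum_nonneg fun _ _ ↦ mul_nonneg (hf _) (Set.indicator_nonneg (by simp) _)

theorem rivalSum_le (hf : ∀ v, 0 ≤ f v) (v : X) (ω : Ω) :
    rivalSum μ C m s f v ω ≤ ∑ _m' ∈ s, ∑ v', f v' :=
  sum_le_sum fun _ _ ↦ sum_le_sum fun v' _ ↦ mul_le_of_le_one_right (hf v')
    (Set.indicator_apply_le' (fun _ ↦ le_rfl) (fun _ ↦ zero_le_one))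

theorem measurable_rivalSum (v : X) : Measurable (rivalSum μ C m s f v) :=
  Finset.measurable_sum _ fun _ _ ↦ Finset.measurable_sum _ fun _ _ ↦
    (measurable_one.indicator (measurableSet_toMeasurable _ _)).const_mul _

theorem sum_le_rivalSum (hf : ∀ v, 0 ≤ f v) (ω : Ω) :
    ∑ m' ∈ s, f (C ω m') ≤ rivalSum μ C m s f (C ω m) ω := by
  refine sum_le_sum fun m' _ ↦ ?_
  have hmem : ω ∈ toMeasurable μ {ω' | C ω' m = C ω m ∧ C ω' m' = C ω m'} :=
    subset_toMeasurable _ _ ⟨rfl, rfl⟩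
  calc f (C ω m') = f (C ω m') * (toMeasurable μ _).indicator 1 ω := by simp [hmem]
    _ ≤ _ := single_le_sum (f := fun v' ↦ f v' *
          (toMeasurable μ {ω' | C ω' m = C ω m ∧ C ω' m' = v'}).indicator 1 ω)
        (fun v' _ ↦ mul_nonneg (hf v') (Set.indicator_nonneg (by simp) _)) (mem_univ _)

variable [IsFiniteMeasure μ]

theorem integrable_rivalSum (v : X) : Integrable (rivalSum μ C m s f v) μ :=
  integrable_finsetSum _ fun _ _ ↦ integrable_finsetSum _ fun _ _ ↦
    ((integrable_const 1).indicator (measurableSet_toMeasurable _ _)).const_mul _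

theorem integrable_rivalSum_rpow (hf : ∀ v, 0 ≤ f v) {ρ : ℝ} (hρ : 0 ≤ ρ) (v : X) :
    Integrable (fun ω ↦ rivalSum μ C m s f v ω ^ ρ) μ := by
  refine .of_bound ((measurable_rivalSum v).pow_const ρ).aestronglyMeasurable
    ((∑ _m' ∈ s, ∑ v', f v') ^ ρ) (ae_of_all _ fun ω ↦ ?_)
  rw [Real.norm_of_nonneg (Real.rpow_nonneg (rivalSum_nonneg hf v ω) _)]
  exact Real.rpow_le_rpow (rivalSum_nonneg hf v ω) (rivalSum_le hf v ω) hρ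

theorem setIntegral_rivalSum_le {q : X → ℝ}
    (hpair : ∀ m' ∈ s, ∀ v v', μ.real {ω | C ω m = v ∧ C ω m' = v'} = q v * q v')
    (hf : ∀ v, 0 ≤ f v) (v : X) (t : Set Ω) :
    ∫ ω in t, rivalSum μ C m s f v ω ∂μ ≤ q v * (#s * ∑ v', q v' * f v') := by
  have hint (m' : M) (v' : X) : Integrable (fun ω ↦ f v' *
      (toMeasurable μ {ω | C ω m = v ∧ C ω m' = v'}).indicator 1 ω) (μ.restrict t) :=
    (((integrable_const 1).indicator (measurableSet_toMeasurable _ _)).const_mul _).restrict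
  calc ∫ ω in t, rivalSum μ C m s f v ω ∂μ
      = ∑ m' ∈ s, ∑ v', f v' * μ.real (toMeasurable μ {ω | C ω m = v ∧ C ω m' = v'} ∩ t) := by
        unfold rivalSum
        rw [integral_finsetSum _ fun m' _ ↦ integrable_finsetSum _ fun v' _ ↦ hint m' v']
        refine sum_congr rfl fun m' _ ↦ ?_
        rw [integral_finsetSum _ fun v' _ ↦ hint m' v']
        simp only [integral_const_mul, integral_indicator_one (measurableSet_toMeasurable _ _),
          measureReal_restrict_apply (measurableSet_toMeasurable _ _)]
    _ ≤ ∑ m' ∈ s, ∑ v', f v' * (q v * q v') := by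
        gcongr with m' hm' v'
        · exact hf v'
        · calc _ ≤ μ.real (toMeasurable μ {ω | C ω m = v ∧ C ω m' = v'}) :=
                measureReal_mono Set.inter_subset_left
            _ = q v * q v' := by
                rw [← hpair m' hm' v v', measureReal_def, measureReal_def, measure_toMeasurable]
    _ = q v * (#s * ∑ v', q v' * f v') := by
        rw [sum_const, nsmul_eq_mul, mul_sum, mul_sum, mul_sum]
        exact sum_congr rfl fun v' _ ↦ by ring

theorem setIntegral_rivalSum_rpow_le {q : X → ℝ} (hlaw : ∀ v, μ.real {ω | C ω m = v} = q v)
    (hpair : ∀ m' ∈ s, ∀ v v', μ.real {ω | C ω m = v ∧ C ω m' = v'} = q v * q v')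
    (hf : ∀ v, 0 ≤ f v) {ρ : ℝ} (hρ0 : 0 ≤ ρ) (hρ1 : ρ ≤ 1) (v : X) :
    ∫ ω in toMeasurable μ {ω | C ω m = v}, rivalSum μ C m s f v ω ^ ρ ∂μ ≤
      q v * (#s * ∑ v', q v' * f v') ^ ρ := by
  have hhull : μ.real (toMeasurable μ {ω | C ω m = v}) = q v := by
    rw [← hlaw v, measureReal_def, measureReal_def, measure_toMeasurable]
  have h := setIntegral_rivalSum_le hpair hf v (toMeasurable μ {ω | C ω m = v})
  rw [← hhull] at h ⊢
  exact setIntegral_rpow_le_of_setIntegral_le hρ0 hρ1 (measure_ne_top _ _) (rivalSum_nonneg hf v)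
    (integrable_rivalSum v).integrableOn (integrable_rivalSum_rpow hf hρ0 v).integrableOn h

theorem exists_integrable_majorant_mul_rpow_sum {q : X → ℝ}
    (hlaw : ∀ v, μ.real {ω | C ω m = v} = q v)
    (hpair : ∀ m' ∈ s, ∀ v v', μ.real {ω | C ω m = v ∧ C ω m' = v'} = q v * q v')
    (hf : ∀ v, 0 ≤ f v) {ρ : ℝ} (hρ0 : 0 ≤ ρ) (hρ1 : ρ ≤ 1) :
    ∃ F : Ω → ℝ, Integrable F μ ∧
      (∀ ω, f (C ω m) * (∑ m' ∈ s, f (C ω m')) ^ ρ ≤ F ω) ∧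
      ∫ ω, F ω ∂μ ≤ (#s : ℝ) ^ ρ * (∑ v, q v * f v) ^ (1 + ρ) := by
  set hull : X → Set Ω := fun v ↦ toMeasurable μ {ω | C ω m = v}
  set term : X → Ω → ℝ := fun v ↦ (hull v).indicator fun ω ↦ rivalSum μ C m s f v ω ^ ρ
  have hhull (v : X) : MeasurableSet (hull v) := measurableSet_toMeasurable _ _
  have hterm_nonneg (v : X) (ω : Ω) : 0 ≤ f v * term v ω :=
    mul_nonneg (hf v)
      (Set.indicator_nonneg (fun ω _ ↦ Real.rpow_nonneg (rivalSum_nonneg hf v ω) _) _)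
  have hterm_int (v : X) : Integrable (term v) μ :=
    (integrable_rivalSum_rpow hf hρ0 v).indicator (hhull v)
  have hS0 : 0 ≤ ∑ v, q v * f v :=
    sum_nonneg fun v _ ↦ mul_nonneg (hlaw v ▸ measureReal_nonneg) (hf v)
  refine ⟨fun ω ↦ ∑ v, f v * term v ω,
    integrable_finsetSum _ fun v _ ↦ (hterm_int v).const_mul _, fun ω ↦ ?_, ?_⟩
  · calc f (C ω m) * (∑ m' ∈ s, f (C ω m')) ^ ρ ≤ f (C ω m) * term (C ω m) ω := by
          have hmem : ω ∈ hull (C ω m) := subset_toMeasurable _ _ rfl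
          rw [show term (C ω m) ω = _ from Set.indicator_of_mem hmem _]
          exact mul_le_mul_of_nonneg_left
            (Real.rpow_le_rpow (sum_nonneg fun _ _ ↦ hf _) (sum_le_rivalSum hf ω) hρ0) (hf _)
      _ ≤ ∑ v, f v * term v ω :=
          single_le_sum (f := fun v ↦ f v * term v ω) (fun v _ ↦ hterm_nonneg v ω) (mem_univ _)
  · calc ∫ ω, ∑ v, f v * term v ω ∂μ
        = ∑ v, f v * ∫ ω in hull v, rivalSum μ C m s f v ω ^ ρ ∂μ := by
          rw [integral_finsetSum _ fun v _ ↦ (hterm_int v).const_mul _]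
          exact sum_congr rfl fun v _ ↦ by rw [integral_const_mul, integral_indicator (hhull v)]
      _ ≤ ∑ v, f v * (q v * (#s * ∑ v', q v' * f v') ^ ρ) := by
          gcongr with v
          · exact hf v
          · exact setIntegral_rivalSum_rpow_le hlaw hpair hf hρ0 hρ1 v
      _ = (#s : ℝ) ^ ρ * (∑ v, q v * f v) ^ (1 + ρ) := by
          rw [Real.mul_rpow (Nat.cast_nonneg _) hS0, Real.rpow_one_add' hS0 (by positivity),
            sum_mul, mul_sum]
          exact sum_congr rfl fun v _ ↦ by ring

end RivalSum

theorem sum_prod_mul_likelihood_rpow {I O : Type*} [Fintype I] [Fintype O] (Q : I → ℝ)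
    {P : I → O → ℝ} (hP0 : ∀ i j, 0 ≤ P i j) {T : ℕ} (y : Fin T → O) (σ : ℝ) :
    ∑ v : Fin T → I, (∏ t, Q (v t)) * likelihood P v y ^ σ = ∏ t, ∑ i, Q i * P i (y t) ^ σ := by
  rw [Fintype.prod_sum (fun t i ↦ Q i * P i (y t) ^ σ)]
  refine sum_congr rfl fun v _ ↦ ?_
  rw [likelihood, ← Real.finsetProd_rpow _ _ (fun t _ ↦ hP0 _ _), prod_mul_distrib]

theorem sum_prod_rpow_eq_pow {O : Type*} [Fintype O] {γ : O → ℝ} (hγ : ∀ j, 0 ≤ γ j)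
    (T : ℕ) (r : ℝ) : ∑ y : Fin T → O, (∏ t, γ (y t)) ^ r = (∑ j, γ j ^ r) ^ T := by
  rw [← Fin.prod_const, Fintype.prod_sum (fun (_ : Fin T) j ↦ γ j ^ r)]
  exact sum_congr rfl fun y _ ↦ (Real.finsetProd_rpow _ _ (fun t _ ↦ hγ _) r).symm

theorem rpow_mul_pow_le_two_rpow {N S ρ : ℝ} {n T : ℕ} (hT : 0 < T) (hρ : 0 ≤ ρ) (hN0 : 0 ≤ N)
    (hN : N ≤ 2 ^ n) (hS : 0 ≤ S) :
    N ^ ρ * S ^ T ≤ 2 ^ (-(T : ℝ) * (-ρ * ((n : ℝ) / T) + -Real.logb 2 S)) := by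
  rcases hS.eq_or_lt with rfl | hS
  · rw [zero_pow hT.ne', mul_zero]
    positivity
  have hexp : -(T : ℝ) * (-ρ * ((n : ℝ) / T) + -Real.logb 2 S) = n * ρ + Real.logb 2 S * T := by
    field_simp
    ring
  rw [hexp, Real.rpow_add two_pos, Real.rpow_mul zero_le_two, Real.rpow_natCast,
    Real.rpow_mul zero_le_two, Real.rpow_logb two_pos (by norm_num) hS, Real.rpow_natCast]
  gcongr

theorem stmt10_general {Ω I O : Type*} [MeasurableSpace Ω] (μ : Measure Ω) [IsProbabilityMeasure μ]
    [Fintype I] [Fintype O] (Q : I → ℝ) (P : I → O → ℝ)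
    (hQ0 : ∀ i, 0 ≤ Q i)
    (hP0 : ∀ i j, 0 ≤ P i j)
    (n T : ℕ) (hT : 0 < T)
    (C : Ω → (Fin n → Bool) → (Fin T → I))
    -- (i) the coordinates of each codeword are i.i.d. with distribution Q
    (hiid : ∀ m v, (μ {ω | C ω m = v}).toReal = ∏ t, Q (v t))
    -- (ii) distinct codewords are pairwise independent
    (hpair : ∀ m m', m ≠ m' → ∀ v v',
      (μ {ω | C ω m = v ∧ C ω m' = v'}).toReal = (∏ t, Q (v t)) * (∏ t, Q (v' t)))
    (m : Fin n → Bool) (ρ : ℝ) (hρ0 : 0 < ρ) (hρ1 : ρ ≤ 1) :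
    ∫ ω, mlErr P (C ω) m ∂μ ≤
      2 ^ (-(T : ℝ) * (-ρ * ((n : ℝ) / (T : ℝ)) + gallagerE0 Q P ρ)) := by
  have hγ (j : O) : 0 ≤ ∑ i, Q i * P i j ^ (1 / (1 + ρ)) :=
    sum_nonneg fun i _ ↦ mul_nonneg (hQ0 i) (Real.rpow_nonneg (hP0 i j) _)
  choose F hF_int hF_ge hF_le using fun y : Fin T → O ↦
    exists_integrable_majorant_mul_rpow_sum (q := fun v ↦ ∏ t, Q (v t)) (hiid m)
      (fun m' hm' ↦ hpair m m' (ne_of_mem_erase hm').symm)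
      (fun v ↦ Real.rpow_nonneg (likelihood_nonneg hP0 v y) (1 / (1 + ρ))) hρ0.le hρ1
  have hcard : ((univ.erase m).card : ℝ) ≤ 2 ^ n := by
    exact_mod_cast (card_le_univ _).trans_eq (by simp)
  calc ∫ ω, mlErr P (C ω) m ∂μ ≤ ∫ ω, ∑ y, F y ω ∂μ :=
        integral_mono_of_nonneg (ae_of_all _ fun ω ↦ mlErr_nonneg hP0 _ m)
          (integrable_finsetSum _ fun y _ ↦ hF_int y) (ae_of_all _ fun ω ↦
            (mlErr_le_sum_rpow hP0 (C ω) m hρ0.le).trans (sum_le_sum fun y _ ↦ hF_ge y ω))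
    _ ≤ ∑ y : Fin T → O, ((univ.erase m).card : ℝ) ^ ρ *
          (∑ v : Fin T → I, (∏ t, Q (v t)) * likelihood P v y ^ (1 / (1 + ρ))) ^ (1 + ρ) := by
        rw [integral_finsetSum _ fun y _ ↦ hF_int y]
        exact sum_le_sum fun y _ ↦ hF_le y
    _ = ((univ.erase m).card : ℝ) ^ ρ *
          (∑ j, (∑ i, Q i * P i j ^ (1 / (1 + ρ))) ^ (1 + ρ)) ^ T := by
        simp only [← mul_sum, sum_prod_mul_likelihood_rpow Q hP0, sum_prod_rpow_eq_pow hγ]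
    _ ≤ _ := rpow_mul_pow_le_two_rpow hT hρ0.le (Nat.cast_nonneg _) hcard
        (sum_nonneg fun j _ ↦ Real.rpow_nonneg (hγ j) _)

theorem stmt10 {Ω I O : Type*} [MeasurableSpace Ω] (μ : Measure Ω) [IsProbabilityMeasure μ]
    [Fintype I] [Fintype O] (Q : I → ℝ) (P : I → O → ℝ)
    (hQ0 : ∀ i, 0 ≤ Q i) (hQ1 : ∑ i : I, Q i = 1)
    (hP0 : ∀ i j, 0 ≤ P i j) (hP1 : ∀ i, ∑ j : O, P i j = 1)
    (n T : ℕ) (hT : 0 < T)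
    (C : Ω → (Fin n → Bool) → (Fin T → I))
    -- (i) the coordinates of each codeword are i.i.d. with distribution Q
    (hiid : ∀ m v, (μ {ω | C ω m = v}).toReal = ∏ t, Q (v t))
    -- (ii) distinct codewords are pairwise independent
    (hpair : ∀ m m', m ≠ m' → ∀ v v',
      (μ {ω | C ω m = v ∧ C ω m' = v'}).toReal = (∏ t, Q (v t)) * (∏ t, Q (v' t)))
    -- (iii) the joint distribution of the codewords is symmetric
    (hsymm : ∀ (σ : Equiv.Perm (Fin n → Bool)) (c : (Fin n → Bool) → Fin T → I),
      μ {ω | C ω = c} = μ {ω | C ω = c ∘ σ})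
    (m : Fin n → Bool) (ρ : ℝ) (hρ0 : 0 < ρ) (hρ1 : ρ ≤ 1) :
    ∫ ω, mlErr P (C ω) m ∂μ ≤
      2 ^ (-(T : ℝ) * (-ρ * ((n : ℝ) / (T : ℝ)) + gallagerE0 Q P ρ)) :=
  stmt10_general μ Q P hQ0 hP0 n T hT C hiid hpair m ρ hρ0 hρ1
end
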